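/- arXiv:2604.13040 — 4 statements merged into one kernel-verified Lean document; each statement's English description precedes it below -/
import Mathlib

section
/- Let (A,B,R,σ) be a context over a multi-adjoint frame, with necessity operators ↓N and ↑N as above, where all conjunctors of all frames have no zero-divisors, and let (A,B,R^B) be the associated Boolean context. Then for every X ⊆ B and Y ⊆ A the equalities (χ_X)^{↑N} = χ_{X^{↑N}} and (χ_Y)^{↓N} = χ_{Y^{↓N}} hold, where χ_X: B→{⊥2,⊤2} and χ_Y: A→{⊥1,⊤1} are the characteristic functions of X and Y, and X^{↑N} = {a ∈ A | for each b ∈ B, if R^B(a,b)=1 then b ∈ X}, Y^{↓N} = {b ∈ B | for each a ∈ A, if R^B(a,b)=1 then a ∈ Y} are the crisp necessity operators. -/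
/-- An adjoint triple with respect to posets `P1`, `P2`, `P3`:
`x ≤ sdiv z y ↔ conj x y ≤ z ↔ y ≤ nwar z x`. -/
def IsAdjointTriple {P1 P2 P3 : Type*} [PartialOrder P1] [PartialOrder P2] [PartialOrder P3]
    (conj : P1 → P2 → P3) (sdiv : P3 → P2 → P1) (nwar : P3 → P1 → P2) : Prop :=
  ∀ (x : P1) (y : P2) (z : P3),
    (x ≤ sdiv z y ↔ conj x y ≤ z) ∧ (conj x y ≤ z ↔ y ≤ nwar z x)

/-- An operator between lower-bounded posets has no zero-divisors. -/
def NoZD {Q1 Q2 Q3 : Type*} [Bot Q1] [Bot Q2] [Bot Q3] (conj : Q1 → Q2 → Q3) : Prop :=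
  ∀ x y, conj x y = ⊥ → x = ⊥ ∨ y = ⊥

/-- Characteristic function of a set, valued in `{⊥, ⊤}`. -/
noncomputable def chi {α L : Type*} [Top L] [Bot L] (X : Set α) (a : α) : L := by
  classical exact if a ∈ X then ⊤ else ⊥

/-- Necessity operator `↑N : L2^B → L1^A` of the object-oriented frame. -/
def upN {A B L1 L2 P ιo : Type*} [CompleteLattice L1]
    (R : A → B → P) (sdivO : ιo → L2 → P → L1) (σo : A → B → ιo) (g : B → L2) : A → L1 :=
  fun a => ⨅ b, sdivO (σo a b) (g b) (R a b)

/-- Necessity operator `↓N : L1^A → L2^B` of the property-oriented frame. -/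
def downN {A B L1 L2 P ιp : Type*} [CompleteLattice L2]
    (R : A → B → P) (nwarP : ιp → L1 → P → L2) (σp : A → B → ιp) (f : A → L1) : B → L2 :=
  fun b => ⨅ a, nwarP (σp a b) (f a) (R a b)

/-!
On characteristic functions the fuzzy necessity operators only ever evaluate an implication
at truth values in `{⊥, ⊤}`. Adjointness alone gives `⊤ ↙ r = ⊤` and `⊥ ↙ ⊥ = ⊤`, and the
absence of zero-divisors gives `⊥ ↙ r = ⊥` whenever `r ≠ ⊥` (from `(⊥ ↙ r) & r = ⊥`); likewise
for `↖`. Hence each infimum is `⊥` exactly when some `R(a, b) ≠ ⊥` meets a point outside the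
set, i.e. exactly off the crisp necessity operator of the Boolean context.
-/

theorem chi_of_mem {α L : Type*} [Top L] [Bot L] {X : Set α} {a : α} (h : a ∈ X) :
    (chi X a : L) = ⊤ := by
  simp [chi, h]

theorem chi_of_notMem {α L : Type*} [Top L] [Bot L] {X : Set α} {a : α} (h : a ∉ X) :
    (chi X a : L) = ⊥ := by
  simp [chi, h]

namespace IsAdjointTriple

variable {P1 P2 P3 : Type*} [PartialOrder P1] [PartialOrder P2] [PartialOrder P3]
  {conj : P1 → P2 → P3} {sdiv : P3 → P2 → P1} {nwar : P3 → P1 → P2}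

theorem sdiv_top [OrderTop P1] [OrderTop P3] (h : IsAdjointTriple conj sdiv nwar) (y : P2) :
    sdiv ⊤ y = ⊤ :=
  top_le_iff.mp <| (h ⊤ y ⊤).1.mpr le_top

theorem nwar_top [OrderTop P2] [OrderTop P3] (h : IsAdjointTriple conj sdiv nwar) (x : P1) :
    nwar ⊤ x = ⊤ :=
  top_le_iff.mp <| (h x ⊤ ⊤).2.mp le_top

theorem conj_bot_left [OrderBot P1] [OrderBot P3] (h : IsAdjointTriple conj sdiv nwar) (y : P2) :
    conj ⊥ y = ⊥ :=
  le_bot_iff.mp <| (h ⊥ y ⊥).1.mp bot_le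

theorem conj_bot_right [OrderBot P2] [OrderBot P3] (h : IsAdjointTriple conj sdiv nwar) (x : P1) :
    conj x ⊥ = ⊥ :=
  le_bot_iff.mp <| (h x ⊥ ⊥).2.mpr bot_le

theorem sdiv_bot_bot [OrderTop P1] [OrderBot P2] [OrderBot P3]
    (h : IsAdjointTriple conj sdiv nwar) : sdiv ⊥ ⊥ = ⊤ :=
  top_le_iff.mp <| (h ⊤ ⊥ ⊥).1.mpr (h.conj_bot_right ⊤).le

theorem nwar_bot_bot [OrderBot P1] [OrderTop P2] [OrderBot P3]
    (h : IsAdjointTriple conj sdiv nwar) : nwar ⊥ ⊥ = ⊤ :=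
  top_le_iff.mp <| (h ⊥ ⊤ ⊥).2.mp (h.conj_bot_left ⊤).le

theorem sdiv_bot_of_ne_bot [OrderBot P1] [OrderBot P2] [OrderBot P3]
    (h : IsAdjointTriple conj sdiv nwar) (hnzd : NoZD conj) {y : P2} (hy : y ≠ ⊥) :
    sdiv ⊥ y = ⊥ :=
  (hnzd _ y (le_bot_iff.mp <| (h _ y ⊥).1.mp le_rfl)).resolve_right hy

theorem nwar_bot_of_ne_bot [OrderBot P1] [OrderBot P2] [OrderBot P3]
    (h : IsAdjointTriple conj sdiv nwar) (hnzd : NoZD conj) {x : P1} (hx : x ≠ ⊥) :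
    nwar ⊥ x = ⊥ :=
  (hnzd x _ (le_bot_iff.mp <| (h x _ ⊥).2.mpr le_rfl)).resolve_left hx

end IsAdjointTriple

theorem iInf_chi_eq_chi {α β L M P : Type*} [CompleteLattice L] [Top M] [Bot M] [Bot P]
    (f : α → β → M → P → L) (R : α → β → P) (X : Set β)
    (htop : ∀ a b r, f a b ⊤ r = ⊤) (hbot_bot : ∀ a b, f a b ⊥ ⊥ = ⊤)
    (hbot : ∀ a b r, r ≠ ⊥ → f a b ⊥ r = ⊥) :
    (fun a => ⨅ b, f a b (chi X b) (R a b)) = chi {a | ∀ b, R a b ≠ ⊥ → b ∈ X} := by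
  funext a
  by_cases hX : a ∈ {a | ∀ b, R a b ≠ ⊥ → b ∈ X}
  · rw [chi_of_mem hX, iInf_eq_top]
    intro b
    by_cases hb : b ∈ X
    · rw [chi_of_mem hb, htop]
    · have hR : R a b = ⊥ := not_not.mp fun hR => hb (hX b hR)
      rw [chi_of_notMem hb, hR, hbot_bot]
  · rw [chi_of_notMem hX]
    obtain ⟨b, hR, hb⟩ : ∃ b, R a b ≠ ⊥ ∧ b ∉ X := by simpa using hX
    refine le_bot_iff.mp (iInf_le_of_le b ?_)
    rw [chi_of_notMem hb, hbot a b _ hR]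

theorem necessity_chi_general
    {A B : Type*}
    {L1 L2 P : Type*} [CompleteLattice L1] [CompleteLattice L2]
    [PartialOrder P] [BoundedOrder P]
    {ιp ιo : Type*}
    (conjP : ιp → P → L2 → L1) (sdivP : ιp → L1 → L2 → P) (nwarP : ιp → L1 → P → L2)
    (hPO : ∀ j, IsAdjointTriple (conjP j) (sdivP j) (nwarP j))
    (hPOnzd : ∀ j, NoZD (conjP j))
    (conjO : ιo → L1 → P → L2) (sdivO : ιo → L2 → P → L1) (nwarO : ιo → L2 → L1 → P)
    (hOO : ∀ k, IsAdjointTriple (conjO k) (sdivO k) (nwarO k))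
    (hOOnzd : ∀ k, NoZD (conjO k))
    (R : A → B → P) (σp : A → B → ιp) (σo : A → B → ιo) :
    ∀ (X : Set B) (Y : Set A),
      upN R sdivO σo (chi X) = (chi {a : A | ∀ b : B, R a b ≠ ⊥ → b ∈ X} : A → L1) ∧
      downN R nwarP σp (chi Y) = (chi {b : B | ∀ a : A, R a b ≠ ⊥ → a ∈ Y} : B → L2) := by
  intro X Y
  constructor
  · exact iInf_chi_eq_chi (fun a b => sdivO (σo a b)) R X
      (fun a b => (hOO _).sdiv_top) (fun a b => (hOO _).sdiv_bot_bot)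
      (fun a b _ => (hOO _).sdiv_bot_of_ne_bot (hOOnzd _))
  · exact iInf_chi_eq_chi (fun b a => nwarP (σp a b)) (fun b a => R a b) Y
      (fun b a => (hPO _).nwar_top) (fun b a => (hPO _).nwar_bot_bot)
      (fun b a _ => (hPO _).nwar_bot_of_ne_bot (hPOnzd _))

/-- The fuzzy necessity operators applied to characteristic functions agree with the
characteristic functions of the crisp necessity operators of the associated Boolean
context. -/
theorem necessity_chi
    {A B : Type*} [Nonempty A] [Nonempty B]
    {L1 L2 P : Type*} [CompleteLattice L1] [CompleteLattice L2]
    [PartialOrder P] [BoundedOrder P]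
    {ι ιp ιo : Type*}
    (conj : ι → L1 → L2 → P) (sdiv : ι → P → L2 → L1) (nwar : ι → P → L1 → L2)
    (hMA : ∀ i, IsAdjointTriple (conj i) (sdiv i) (nwar i))
    (hMAnzd : ∀ i, NoZD (conj i))
    (conjP : ιp → P → L2 → L1) (sdivP : ιp → L1 → L2 → P) (nwarP : ιp → L1 → P → L2)
    (hPO : ∀ j, IsAdjointTriple (conjP j) (sdivP j) (nwarP j))
    (hPOnzd : ∀ j, NoZD (conjP j))
    (conjO : ιo → L1 → P → L2) (sdivO : ιo → L2 → P → L1) (nwarO : ιo → L2 → L1 → P)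
    (hOO : ∀ k, IsAdjointTriple (conjO k) (sdivO k) (nwarO k))
    (hOOnzd : ∀ k, NoZD (conjO k))
    (R : A → B → P) (σ : A → B → ι) (σp : A → B → ιp) (σo : A → B → ιo) :
    ∀ (X : Set B) (Y : Set A),
      upN R sdivO σo (chi X) = (chi {a : A | ∀ b : B, R a b ≠ ⊥ → b ∈ X} : A → L1) ∧
      downN R nwarP σp (chi Y) = (chi {b : B | ∀ a : A, R a b ≠ ⊥ → a ∈ Y} : B → L2) :=
  necessity_chi_general conjP sdivP nwarP hPO hPOnzd conjO sdivO nwarO hOO hOOnzd R σp σo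
end

section
/- Let (A,B,R,σ) be a normalized context over a multi-adjoint frame, with necessity operators ↓N and ↑N and all conjunctors of all frames without zero-divisors. If (A,B,R,σ) has a decomposition into independent subcontexts {(A_λ, B_λ, R_{A_λ×B_λ}, σ_{A_λ×B_λ})}_{λ∈Λ}, then (χ_{B_λ}, χ_{A_λ}) ∈ F_N for all λ ∈ Λ, i.e. (χ_{B_λ})^{↑N} = χ_{A_λ} and (χ_{A_λ})^{↓N} = χ_{B_λ}. -/
/-- A context is normalized if every row and every column of `R` contains both a
`⊥` value and a non-`⊥` value. -/
def Normalized {A B P : Type*} [Bot P] (R : A → B → P) : Prop :=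
  (∀ a, (∃ b, R a b ≠ ⊥) ∧ (∃ b, R a b = ⊥)) ∧
  (∀ b, (∃ a, R a b ≠ ⊥) ∧ (∃ a, R a b = ⊥))

/-- `(Y, X, R|_{Y×X})` is a separable subcontext of the context with relation `R`. -/
def Separable {A B P : Type*} [Bot P] (R : A → B → P) (Y : Set A) (X : Set B) : Prop :=
  Y ≠ ∅ ∧ Y ≠ Set.univ ∧ X ≠ ∅ ∧ X ≠ Set.univ ∧
  (∃ a ∈ Y, ∃ b ∈ X, R a b ≠ ⊥) ∧
  (∀ a ∈ Y, ∀ b ∉ X, R a b = ⊥) ∧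
  (∀ a ∉ Y, ∀ b ∈ X, R a b = ⊥)

/-- The family `(Afam l, Bfam l)` is a decomposition of the context into
independent subcontexts. -/
def IsDecomposition {A B P L1 L2 ι Λ : Type*} [Bot P] [Bot L1] [Bot L2]
    (R : A → B → P) (conj : ι → L1 → L2 → P) (σ : A → B → ι)
    (Afam : Λ → Set A) (Bfam : Λ → Set B) : Prop :=
  Nonempty Λ ∧
  (∀ l, Separable R (Afam l) (Bfam l)) ∧
  (⋃ l, Afam l) = Set.univ ∧
  (⋃ l, Bfam l) = Set.univ ∧
  (∀ l m, l ≠ m → Afam l ∩ Afam m = ∅) ∧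
  (∀ l m, l ≠ m → Bfam l ∩ Bfam m = ∅) ∧
  (∀ l, ∀ a ∉ Afam l, ∀ b ∈ Bfam l, NoZD (conj (σ a b))) ∧
  (∀ l, ∀ a ∈ Afam l, ∀ b ∉ Bfam l, NoZD (conj (σ a b)))

namespace IsAdjointTriple

variable {P1 P2 P3 : Type*} [PartialOrder P1] [PartialOrder P2] [PartialOrder P3]
  {c : P1 → P2 → P3} {s : P3 → P2 → P1} {n : P3 → P1 → P2}

theorem sdiv_top_left [OrderTop P1] [OrderTop P3] (h : IsAdjointTriple c s n) (y : P2) :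
    s ⊤ y = ⊤ :=
  top_unique ((h ⊤ y ⊤).1.mpr le_top)

theorem sdiv_bot_right [OrderTop P1] [OrderBot P2] (h : IsAdjointTriple c s n) (z : P3) :
    s z ⊥ = ⊤ :=
  top_unique ((h ⊤ ⊥ z).1.mpr ((h ⊤ ⊥ z).2.mpr bot_le))

theorem sdiv_bot_left [OrderBot P1] [OrderBot P2] [OrderBot P3]
    (h : IsAdjointTriple c s n) (hc : NoZD c) {y : P2} (hy : y ≠ ⊥) : s ⊥ y = ⊥ :=
  (hc _ _ (le_bot_iff.mp ((h (s ⊥ y) y ⊥).1.mp le_rfl))).resolve_right hy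

theorem nwar_top_left [OrderTop P2] [OrderTop P3] (h : IsAdjointTriple c s n) (x : P1) :
    n ⊤ x = ⊤ :=
  top_unique ((h x ⊤ ⊤).2.mp le_top)

theorem nwar_bot_right [OrderBot P1] [OrderTop P2] (h : IsAdjointTriple c s n) (z : P3) :
    n z ⊥ = ⊤ :=
  top_unique ((h ⊥ ⊤ z).2.mp ((h ⊥ ⊤ z).1.mp bot_le))

theorem nwar_bot_left [OrderBot P1] [OrderBot P2] [OrderBot P3]
    (h : IsAdjointTriple c s n) (hc : NoZD c) {x : P1} (hx : x ≠ ⊥) : n ⊥ x = ⊥ :=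
  (hc _ _ (le_bot_iff.mp ((h x (n ⊥ x) ⊥).2.mpr le_rfl))).resolve_left hx

end IsAdjointTriple

section BlockDiagonal

variable {A B L1 L2 P : Type*} [PartialOrder P] [BoundedOrder P]
  {R : A → B → P} {Y : Set A} {X : Set B}

theorem upN_chi_eq_chi {ιo : Type*} [CompleteLattice L1] [PartialOrder L2] [BoundedOrder L2]
    {conjO : ιo → L1 → P → L2} {sdivO : ιo → L2 → P → L1} {nwarO : ιo → L2 → L1 → P}
    (hOO : ∀ k, IsAdjointTriple (conjO k) (sdivO k) (nwarO k)) (hOOnzd : ∀ k, NoZD (conjO k))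
    (σo : A → B → ιo) (hrow : ∀ a, ∃ b, R a b ≠ ⊥)
    (hYX : ∀ a ∈ Y, ∀ b ∉ X, R a b = ⊥) (hXY : ∀ a ∉ Y, ∀ b ∈ X, R a b = ⊥) :
    upN R sdivO σo (chi X) = (chi Y : A → L1) := by
  funext a
  by_cases ha : a ∈ Y
  · rw [chi_of_mem ha]
    refine top_unique (le_iInf fun b => ?_)
    by_cases hb : b ∈ X
    · rw [chi_of_mem hb, (hOO _).sdiv_top_left]
    · rw [hYX a ha b hb, (hOO _).sdiv_bot_right]
  · obtain ⟨b, hb⟩ := hrow a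
    have hbX : b ∉ X := fun hbX => hb (hXY a ha b hbX)
    rw [chi_of_notMem ha]
    refine eq_bot_iff.mpr (iInf_le_of_le b ?_)
    rw [chi_of_notMem hbX, (hOO _).sdiv_bot_left (hOOnzd _) hb]

theorem downN_chi_eq_chi {ιp : Type*} [PartialOrder L1] [BoundedOrder L1] [CompleteLattice L2]
    {conjP : ιp → P → L2 → L1} {sdivP : ιp → L1 → L2 → P} {nwarP : ιp → L1 → P → L2}
    (hPO : ∀ j, IsAdjointTriple (conjP j) (sdivP j) (nwarP j)) (hPOnzd : ∀ j, NoZD (conjP j))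
    (σp : A → B → ιp) (hcol : ∀ b, ∃ a, R a b ≠ ⊥)
    (hYX : ∀ a ∈ Y, ∀ b ∉ X, R a b = ⊥) (hXY : ∀ a ∉ Y, ∀ b ∈ X, R a b = ⊥) :
    downN R nwarP σp (chi Y) = (chi X : B → L2) := by
  funext b
  by_cases hb : b ∈ X
  · rw [chi_of_mem hb]
    refine top_unique (le_iInf fun a => ?_)
    by_cases ha : a ∈ Y
    · rw [chi_of_mem ha, (hPO _).nwar_top_left]
    · rw [hXY a ha b hb, (hPO _).nwar_bot_right]
  · obtain ⟨a, ha⟩ := hcol b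
    have haY : a ∉ Y := fun haY => ha (hYX a haY b hb)
    rw [chi_of_notMem hb]
    refine eq_bot_iff.mpr (iInf_le_of_le a ?_)
    rw [chi_of_notMem haY, (hPO _).nwar_bot_left (hPOnzd _) ha]

end BlockDiagonal

theorem decomposition_chi_mem_FN_general
    {A B : Type*}
    {L1 L2 P : Type*} [CompleteLattice L1] [CompleteLattice L2]
    [PartialOrder P] [BoundedOrder P]
    {ι ιp ιo : Type*}
    (conj : ι → L1 → L2 → P)
    (conjP : ιp → P → L2 → L1) (sdivP : ιp → L1 → L2 → P) (nwarP : ιp → L1 → P → L2)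
    (hPO : ∀ j, IsAdjointTriple (conjP j) (sdivP j) (nwarP j))
    (hPOnzd : ∀ j, NoZD (conjP j))
    (conjO : ιo → L1 → P → L2) (sdivO : ιo → L2 → P → L1) (nwarO : ιo → L2 → L1 → P)
    (hOO : ∀ k, IsAdjointTriple (conjO k) (sdivO k) (nwarO k))
    (hOOnzd : ∀ k, NoZD (conjO k))
    (R : A → B → P) (σ : A → B → ι) (σp : A → B → ιp) (σo : A → B → ιo)
    (hnorm : Normalized R)
    {Λ : Type*} (Afam : Λ → Set A) (Bfam : Λ → Set B)
    (hdec : IsDecomposition R conj σ Afam Bfam) :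
    ∀ l : Λ,
      upN R sdivO σo (chi (Bfam l)) = (chi (Afam l) : A → L1) ∧
      downN R nwarP σp (chi (Afam l)) = (chi (Bfam l) : B → L2) := by
  intro l
  obtain ⟨-, -, -, -, -, hYX, hXY⟩ := hdec.2.1 l
  exact ⟨upN_chi_eq_chi hOO hOOnzd σo (fun a => (hnorm.1 a).1) hYX hXY,
    downN_chi_eq_chi hPO hPOnzd σp (fun b => (hnorm.2 b).1) hYX hXY⟩

/-- If a normalized context has a decomposition into independent subcontexts
`{(A_λ, B_λ)}`, then `(χ_{B_λ}, χ_{A_λ}) ∈ F_N` for all `λ`. -/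
theorem decomposition_chi_mem_FN
    {A B : Type*} [Nonempty A] [Nonempty B]
    {L1 L2 P : Type*} [CompleteLattice L1] [CompleteLattice L2]
    [PartialOrder P] [BoundedOrder P]
    {ι ιp ιo : Type*}
    (conj : ι → L1 → L2 → P) (sdiv : ι → P → L2 → L1) (nwar : ι → P → L1 → L2)
    (hMA : ∀ i, IsAdjointTriple (conj i) (sdiv i) (nwar i))
    (hMAnzd : ∀ i, NoZD (conj i))
    (conjP : ιp → P → L2 → L1) (sdivP : ιp → L1 → L2 → P) (nwarP : ιp → L1 → P → L2)
    (hPO : ∀ j, IsAdjointTriple (conjP j) (sdivP j) (nwarP j))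
    (hPOnzd : ∀ j, NoZD (conjP j))
    (conjO : ιo → L1 → P → L2) (sdivO : ιo → L2 → P → L1) (nwarO : ιo → L2 → L1 → P)
    (hOO : ∀ k, IsAdjointTriple (conjO k) (sdivO k) (nwarO k))
    (hOOnzd : ∀ k, NoZD (conjO k))
    (R : A → B → P) (σ : A → B → ι) (σp : A → B → ιp) (σo : A → B → ιo)
    (hnorm : Normalized R)
    {Λ : Type*} (Afam : Λ → Set A) (Bfam : Λ → Set B)
    (hdec : IsDecomposition R conj σ Afam Bfam) :
    ∀ l : Λ,
      upN R sdivO σo (chi (Bfam l)) = (chi (Afam l) : A → L1) ∧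
      downN R nwarP σp (chi (Afam l)) = (chi (Bfam l) : B → L2) :=
  decomposition_chi_mem_FN_general conj conjP sdivP nwarP hPO hPOnzd conjO sdivO nwarO hOO hOOnzd R
    σ σp σo hnorm Afam Bfam hdec
end

section
/- Let (A,B,R,σ) be a normalized context over a multi-adjoint frame whose conjunctors have no zero-divisors, with concept-forming operators ↑ and ↓, and let (g,f) = (χ_X, χ_Y) ∈ FC. If g^↑ ≠ f_⊥, then the pair ⟨g, g^↑⟩ is a multi-adjoint concept, i.e. g^{↑↓} = g. Dually, if f^↓ ≠ g_⊥, then ⟨f^↓, f⟩ is a multi-adjoint concept, i.e. f^{↓↑} = f. Here f_⊥(a) = ⊥1 for all a ∈ A and g_⊥(b) = ⊥2 for all b ∈ B. -/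
/-- Concept-forming operator `↑ : L2^B → L1^A`. -/
def upOp {A B L1 L2 P ι : Type*} [CompleteLattice L1]
    (R : A → B → P) (sdiv : ι → P → L2 → L1) (σ : A → B → ι) (g : B → L2) : A → L1 :=
  fun a => ⨅ b, sdiv (σ a b) (R a b) (g b)

/-- Concept-forming operator `↓ : L1^A → L2^B`. -/
def downOp {A B L1 L2 P ι : Type*} [CompleteLattice L2]
    (R : A → B → P) (nwar : ι → P → L1 → L2) (σ : A → B → ι) (f : A → L1) : B → L2 :=
  fun b => ⨅ a, nwar (σ a b) (R a b) (f a)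

/-- `(χ_X, χ_Y)` belongs to the set `FC`, i.e. `∅ ≠ X ⊊ B`, `∅ ≠ Y ⊊ A`, and
`(χ_X, χ_Y) ∈ F_N` (that is, `(χ_X)^{↑N} = χ_Y` and `(χ_Y)^{↓N} = χ_X`). -/
def MemFC {A B L1 L2 P ιp ιo : Type*} [CompleteLattice L1] [CompleteLattice L2]
    (R : A → B → P) (sdivO : ιo → L2 → P → L1) (σo : A → B → ιo)
    (nwarP : ιp → L1 → P → L2) (σp : A → B → ιp)
    (X : Set B) (Y : Set A) : Prop :=
  X ≠ ∅ ∧ X ≠ Set.univ ∧ Y ≠ ∅ ∧ Y ≠ Set.univ ∧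
  upN R sdivO σo (chi X) = (chi Y : A → L1) ∧
  downN R nwarP σp (chi Y) = (chi X : B → L2)

/-!
The frame conditions force `R` to be block diagonal: since `(χ_X, χ_Y)` is a pair of the
necessity operators and the implications have no zero-divisors, `R a b ≠ ⊥` implies
`a ∈ Y ↔ b ∈ X`. Hence `g^↑` vanishes off `Y`, so `g^↑ ≠ f_⊥` provides some `a₀ ∈ Y` with
`g^↑ a₀ ≠ ⊥`; the row of `a₀` vanishes off `X`, which makes `g^{↑↓}` vanish off `X`, while
`g ≤ g^{↑↓}` gives `⊤` on `X`. The second claim is the first one for the transposed context.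
-/

theorem IsAdjointTriple.flip {P1 P2 P3 : Type*} [PartialOrder P1] [PartialOrder P2]
    [PartialOrder P3] {conj : P1 → P2 → P3} {sdiv : P3 → P2 → P1} {nwar : P3 → P1 → P2}
    (h : IsAdjointTriple conj sdiv nwar) : IsAdjointTriple (flip conj) nwar sdiv :=
  fun x y z => ⟨(h y x z).2.symm, (h y x z).1.symm⟩

theorem NoZD.flip {Q1 Q2 Q3 : Type*} [Bot Q1] [Bot Q2] [Bot Q3] {conj : Q1 → Q2 → Q3}
    (h : NoZD conj) : NoZD (flip conj) :=
  fun x y hxy => (h y x hxy).symm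

namespace IsAdjointTriple

variable {P1 P2 P3 : Type*} [PartialOrder P1] [OrderBot P1] [PartialOrder P2] [OrderBot P2]
  [PartialOrder P3] [OrderBot P3] {conj : P1 → P2 → P3} {sdiv : P3 → P2 → P1}
  {nwar : P3 → P1 → P2}

theorem le_sdiv_bot_iff (h : IsAdjointTriple conj sdiv nwar) (hnzd : NoZD conj)
    {x : P1} {y : P2} : x ≤ sdiv ⊥ y ↔ x = ⊥ ∨ y = ⊥ := by
  rw [(h x y ⊥).1, le_bot_iff]
  refine ⟨hnzd x y, ?_⟩
  rintro (rfl | rfl)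
  · exact le_bot_iff.1 ((h ⊥ y ⊥).1.1 bot_le)
  · exact le_bot_iff.1 ((h x ⊥ ⊥).2.2 bot_le)

theorem sdiv_bot_eq_bot (h : IsAdjointTriple conj sdiv nwar) (hnzd : NoZD conj) {y : P2}
    (hy : y ≠ ⊥) : sdiv ⊥ y = ⊥ :=
  ((h.le_sdiv_bot_iff hnzd).1 le_rfl).resolve_right hy

theorem nwar_bot_eq_bot (h : IsAdjointTriple conj sdiv nwar) (hnzd : NoZD conj) {x : P1}
    (hx : x ≠ ⊥) : nwar ⊥ x = ⊥ :=
  h.flip.sdiv_bot_eq_bot hnzd.flip hx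

end IsAdjointTriple

section Chi

variable {α L : Type*} [Top L] [Bot L] {X : Set α} {a : α}

theorem chi_of_mem_s15 (ha : a ∈ X) : (chi X a : L) = ⊤ := by
  simp [chi, ha]

theorem chi_of_notMem_s15 (ha : a ∉ X) : (chi X a : L) = ⊥ := by
  simp [chi, ha]

end Chi

section Transpose

variable {A B L1 L2 P ι : Type*} {R : A → B → P} {σ : A → B → ι}

theorem downOp_eq_upOp_flip [CompleteLattice L2] {nwar : ι → P → L1 → L2} :
    downOp R nwar σ = upOp (flip R) nwar (flip σ) :=
  rfl

theorem upOp_eq_downOp_flip [CompleteLattice L1] {sdiv : ι → P → L2 → L1} :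
    upOp R sdiv σ = downOp (flip R) sdiv (flip σ) :=
  rfl

theorem upN_flip_eq_downN [CompleteLattice L2] {nwarP : ι → L1 → P → L2} :
    upN (flip R) nwarP (flip σ) = downN R nwarP σ :=
  rfl

end Transpose

section ConceptForming

variable {A B L1 L2 P ι : Type*} [CompleteLattice L1] [CompleteLattice L2]
  [PartialOrder P] {conj : ι → L1 → L2 → P} {sdiv : ι → P → L2 → L1}
  {nwar : ι → P → L1 → L2} {R : A → B → P} {σ : A → B → ι}

theorem le_downOp_upOp (hMA : ∀ i, IsAdjointTriple (conj i) (sdiv i) (nwar i))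
    (g : B → L2) (b : B) : g b ≤ downOp R nwar σ (upOp R sdiv σ g) b :=
  le_iInf fun _ => (hMA _ _ _ _).2.1 ((hMA _ _ _ _).1.1 (iInf_le _ b))

variable [OrderBot P]

theorem upOp_eq_bot_of_eq_bot (hMA : ∀ i, IsAdjointTriple (conj i) (sdiv i) (nwar i))
    (hnzd : ∀ i, NoZD (conj i)) {g : B → L2} {a : A} {b : B} (hR : R a b = ⊥)
    (hg : g b ≠ ⊥) : upOp R sdiv σ g a = ⊥ :=
  le_bot_iff.1 <| (iInf_le _ b).trans_eq <| by
    rw [hR, (hMA _).sdiv_bot_eq_bot (hnzd _) hg]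

theorem downOp_eq_bot_of_eq_bot (hMA : ∀ i, IsAdjointTriple (conj i) (sdiv i) (nwar i))
    (hnzd : ∀ i, NoZD (conj i)) {f : A → L1} {a : A} {b : B} (hR : R a b = ⊥)
    (hf : f a ≠ ⊥) : downOp R nwar σ f b = ⊥ :=
  le_bot_iff.1 <| (iInf_le _ a).trans_eq <| by
    rw [hR, (hMA _).nwar_bot_eq_bot (hnzd _) hf]

theorem eq_bot_of_upN_chi_eq [Nontrivial L1] {ιo : Type*} {conjO : ιo → L1 → P → L2}
    {sdivO : ιo → L2 → P → L1} {nwarO : ιo → L2 → L1 → P} {σo : A → B → ιo}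
    (hOO : ∀ k, IsAdjointTriple (conjO k) (sdivO k) (nwarO k)) (hOOnzd : ∀ k, NoZD (conjO k))
    {X : Set B} {Y : Set A} (hXY : upN R sdivO σo (chi X) = chi Y) {a : A} {b : B}
    (ha : a ∈ Y) (hb : b ∉ X) : R a b = ⊥ := by
  have htop : (⊤ : L1) ≤ sdivO (σo a b) ⊥ (R a b) := by
    rw [← chi_of_mem_s15 ha, ← hXY, ← chi_of_notMem_s15 hb]
    exact iInf_le _ b
  exact ((hOO _).le_sdiv_bot_iff (hOOnzd _) |>.1 htop).resolve_left top_ne_bot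

theorem mem_iff_mem_of_ne_bot [Nontrivial L1] [Nontrivial L2] {ιo ιp : Type*}
    {conjO : ιo → L1 → P → L2} {sdivO : ιo → L2 → P → L1} {nwarO : ιo → L2 → L1 → P}
    {conjP : ιp → P → L2 → L1} {sdivP : ιp → L1 → L2 → P} {nwarP : ιp → L1 → P → L2}
    {σo : A → B → ιo} {σp : A → B → ιp}
    (hPO : ∀ j, IsAdjointTriple (conjP j) (sdivP j) (nwarP j)) (hPOnzd : ∀ j, NoZD (conjP j))
    (hOO : ∀ k, IsAdjointTriple (conjO k) (sdivO k) (nwarO k)) (hOOnzd : ∀ k, NoZD (conjO k))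
    {X : Set B} {Y : Set A} (hUpN : upN R sdivO σo (chi X) = chi Y)
    (hDownN : downN R nwarP σp (chi Y) = chi X) {a : A} {b : B} (hR : R a b ≠ ⊥) :
    a ∈ Y ↔ b ∈ X := by
  constructor
  · intro ha
    by_contra hb
    exact hR (eq_bot_of_upN_chi_eq hOO hOOnzd hUpN ha hb)
  · intro hb
    by_contra ha
    rw [← upN_flip_eq_downN] at hDownN
    exact hR (eq_bot_of_upN_chi_eq (R := flip R) (fun j => (hPO j).flip)
      (fun j => (hPOnzd j).flip) hDownN hb ha)

theorem downOp_upOp_chi_eq [Nontrivial L2]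
    (hMA : ∀ i, IsAdjointTriple (conj i) (sdiv i) (nwar i)) (hnzd : ∀ i, NoZD (conj i))
    {X : Set B} {Y : Set A} (hX : X.Nonempty)
    (hblock : ∀ a b, R a b ≠ ⊥ → (a ∈ Y ↔ b ∈ X))
    (hne : upOp R sdiv σ (chi X) ≠ fun _ => ⊥) :
    downOp R nwar σ (upOp R sdiv σ (chi X)) = chi X := by
  obtain ⟨b₀, hb₀⟩ := hX
  obtain ⟨a₀, ha₀⟩ : ∃ a, upOp R sdiv σ (chi X) a ≠ ⊥ := by
    by_contra! h
    exact hne (funext h)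
  have ha₀Y : a₀ ∈ Y := by
    by_contra ha
    refine ha₀ (upOp_eq_bot_of_eq_bot hMA hnzd ?_ (by rw [chi_of_mem_s15 hb₀]; exact top_ne_bot))
    exact not_ne_iff.1 fun hR => ha ((hblock a₀ b₀ hR).2 hb₀)
  funext b
  by_cases hb : b ∈ X
  · rw [chi_of_mem_s15 hb]
    exact top_le_iff.1 (chi_of_mem_s15 (L := L2) hb ▸ le_downOp_upOp hMA (chi X) b)
  · rw [chi_of_notMem_s15 hb]
    refine downOp_eq_bot_of_eq_bot hMA hnzd ?_ ha₀
    exact not_ne_iff.1 fun hR => hb ((hblock a₀ b hR).1 ha₀Y)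

theorem upOp_downOp_chi_eq [Nontrivial L1]
    (hMA : ∀ i, IsAdjointTriple (conj i) (sdiv i) (nwar i)) (hnzd : ∀ i, NoZD (conj i))
    {X : Set B} {Y : Set A} (hY : Y.Nonempty)
    (hblock : ∀ a b, R a b ≠ ⊥ → (a ∈ Y ↔ b ∈ X))
    (hne : downOp R nwar σ (chi Y) ≠ fun _ => ⊥) :
    upOp R sdiv σ (downOp R nwar σ (chi Y)) = chi Y := by
  rw [downOp_eq_upOp_flip] at hne ⊢
  rw [upOp_eq_downOp_flip]
  exact downOp_upOp_chi_eq (conj := fun i => flip (conj i)) (fun i => (hMA i).flip)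
    (fun i => (hnzd i).flip) hY (fun b a hR => (hblock a b hR).symm) hne

end ConceptForming

theorem FC_pair_gives_concepts_general
    {A B : Type*}
    {L1 L2 P : Type*} [CompleteLattice L1] [CompleteLattice L2]
    [PartialOrder P] [BoundedOrder P]
    {ι ιp ιo : Type*}
    (conj : ι → L1 → L2 → P) (sdiv : ι → P → L2 → L1) (nwar : ι → P → L1 → L2)
    (hMA : ∀ i, IsAdjointTriple (conj i) (sdiv i) (nwar i))
    (hMAnzd : ∀ i, NoZD (conj i))
    (conjP : ιp → P → L2 → L1) (sdivP : ιp → L1 → L2 → P) (nwarP : ιp → L1 → P → L2)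
    (hPO : ∀ j, IsAdjointTriple (conjP j) (sdivP j) (nwarP j))
    (hPOnzd : ∀ j, NoZD (conjP j))
    (conjO : ιo → L1 → P → L2) (sdivO : ιo → L2 → P → L1) (nwarO : ιo → L2 → L1 → P)
    (hOO : ∀ k, IsAdjointTriple (conjO k) (sdivO k) (nwarO k))
    (hOOnzd : ∀ k, NoZD (conjO k))
    (R : A → B → P) (σ : A → B → ι) (σp : A → B → ιp) (σo : A → B → ιo)
    (X : Set B) (Y : Set A)
    (hXY : MemFC (L1 := L1) (L2 := L2) R sdivO σo nwarP σp X Y) :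
    (upOp R sdiv σ (chi X) ≠ (fun _ : A => (⊥ : L1)) →
      downOp R nwar σ (upOp R sdiv σ (chi X)) = (chi X : B → L2)) ∧
    (downOp R nwar σ (chi Y) ≠ (fun _ : B => (⊥ : L2)) →
      upOp R sdiv σ (downOp R nwar σ (chi Y)) = (chi Y : A → L1)) := by
  obtain ⟨hX, -, hY, -, hUpN, hDownN⟩ := hXY
  rcases subsingleton_or_nontrivial L1 with _ | _
  · exact ⟨fun hne => absurd (Subsingleton.elim _ _) hne, fun _ => Subsingleton.elim _ _⟩
  rcases subsingleton_or_nontrivial L2 with _ | _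
  · exact ⟨fun _ => Subsingleton.elim _ _, fun hne => absurd (Subsingleton.elim _ _) hne⟩
  have hblock : ∀ a b, R a b ≠ ⊥ → (a ∈ Y ↔ b ∈ X) := fun _ _ =>
    mem_iff_mem_of_ne_bot hPO hPOnzd hOO hOOnzd hUpN hDownN
  exact ⟨downOp_upOp_chi_eq hMA hMAnzd (Set.nonempty_iff_ne_empty.2 hX) hblock,
    upOp_downOp_chi_eq hMA hMAnzd (Set.nonempty_iff_ne_empty.2 hY) hblock⟩

/-- For `(g, f) = (χ_X, χ_Y) ∈ FC`: if `g^↑ ≠ f_⊥`, then `⟨g, g^↑⟩` is a multi-adjoint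
concept (`g^{↑↓} = g`); dually, if `f^↓ ≠ g_⊥`, then `⟨f^↓, f⟩` is a multi-adjoint
concept (`f^{↓↑} = f`). -/
theorem FC_pair_gives_concepts
    {A B : Type*} [Nonempty A] [Nonempty B]
    {L1 L2 P : Type*} [CompleteLattice L1] [CompleteLattice L2]
    [PartialOrder P] [BoundedOrder P]
    {ι ιp ιo : Type*}
    (conj : ι → L1 → L2 → P) (sdiv : ι → P → L2 → L1) (nwar : ι → P → L1 → L2)
    (hMA : ∀ i, IsAdjointTriple (conj i) (sdiv i) (nwar i))
    (hMAnzd : ∀ i, NoZD (conj i))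
    (conjP : ιp → P → L2 → L1) (sdivP : ιp → L1 → L2 → P) (nwarP : ιp → L1 → P → L2)
    (hPO : ∀ j, IsAdjointTriple (conjP j) (sdivP j) (nwarP j))
    (hPOnzd : ∀ j, NoZD (conjP j))
    (conjO : ιo → L1 → P → L2) (sdivO : ιo → L2 → P → L1) (nwarO : ιo → L2 → L1 → P)
    (hOO : ∀ k, IsAdjointTriple (conjO k) (sdivO k) (nwarO k))
    (hOOnzd : ∀ k, NoZD (conjO k))
    (R : A → B → P) (σ : A → B → ι) (σp : A → B → ιp) (σo : A → B → ιo)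
    (hnorm : Normalized R)
    (X : Set B) (Y : Set A)
    (hXY : MemFC (L1 := L1) (L2 := L2) R sdivO σo nwarP σp X Y) :
    (upOp R sdiv σ (chi X) ≠ (fun _ : A => (⊥ : L1)) →
      downOp R nwar σ (upOp R sdiv σ (chi X)) = (chi X : B → L2)) ∧
    (downOp R nwar σ (chi Y) ≠ (fun _ : B => (⊥ : L2)) →
      upOp R sdiv σ (downOp R nwar σ (chi Y)) = (chi Y : A → L1)) :=
  FC_pair_gives_concepts_general conj sdiv nwar hMA hMAnzd conjP sdivP nwarP hPO hPOnzd conjO sdivO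
    nwarO hOO hOOnzd R σ σp σo X Y hXY
end

section
/- Let (A,B,R,σ) be a context over a multi-adjoint frame, with concept-forming operators ↑: L2^B → L1^A and ↓: L1^A → L2^B. Then (↑,↓) is an antitone Galois connection: for all g ∈ L2^B and f ∈ L1^A, f ⪯1 g^↑ if and only if g ⪯2 f^↓ (where fuzzy sets are ordered pointwise). -/
theorem IsAdjointTriple.le_sdiv_iff_le_nwar {P1 P2 P3 : Type*} [PartialOrder P1]
    [PartialOrder P2] [PartialOrder P3] {conj : P1 → P2 → P3} {sdiv : P3 → P2 → P1}
    {nwar : P3 → P1 → P2} (h : IsAdjointTriple conj sdiv nwar) (x : P1) (y : P2) (z : P3) :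
    x ≤ sdiv z y ↔ y ≤ nwar z x :=
  (h x y z).1.trans (h x y z).2

theorem le_upOp_iff {A B L1 L2 P ι : Type*} [CompleteLattice L1]
    (R : A → B → P) (sdiv : ι → P → L2 → L1) (σ : A → B → ι) (g : B → L2) (f : A → L1) :
    f ≤ upOp R sdiv σ g ↔ ∀ a b, f a ≤ sdiv (σ a b) (R a b) (g b) := by
  simp only [Pi.le_def, upOp, le_iInf_iff]

theorem le_downOp_iff {A B L1 L2 P ι : Type*} [CompleteLattice L2]
    (R : A → B → P) (nwar : ι → P → L1 → L2) (σ : A → B → ι) (f : A → L1) (g : B → L2) :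
    g ≤ downOp R nwar σ f ↔ ∀ b a, g b ≤ nwar (σ a b) (R a b) (f a) := by
  simp only [Pi.le_def, downOp, le_iInf_iff]

theorem concept_forming_galois_connection_general
    {A B : Type*}
    {L1 L2 P : Type*} [CompleteLattice L1] [CompleteLattice L2]
    [PartialOrder P]
    {ι : Type*}
    (conj : ι → L1 → L2 → P) (sdiv : ι → P → L2 → L1) (nwar : ι → P → L1 → L2)
    (hMA : ∀ i, IsAdjointTriple (conj i) (sdiv i) (nwar i))
    (R : A → B → P) (σ : A → B → ι) :
    ∀ (g : B → L2) (f : A → L1),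
      f ≤ upOp R sdiv σ g ↔ g ≤ downOp R nwar σ f := by
  intro g f
  rw [le_upOp_iff, le_downOp_iff, forall_comm]
  simp only [(hMA _).le_sdiv_iff_le_nwar]

/-- The concept-forming operators of a multi-adjoint concept lattice form an antitone
Galois connection: `f ⪯₁ g^↑ ↔ g ⪯₂ f^↓`. -/
theorem concept_forming_galois_connection
    {A B : Type*} [Nonempty A] [Nonempty B]
    {L1 L2 P : Type*} [CompleteLattice L1] [CompleteLattice L2]
    [PartialOrder P] [BoundedOrder P]
    {ι : Type*}
    (conj : ι → L1 → L2 → P) (sdiv : ι → P → L2 → L1) (nwar : ι → P → L1 → L2)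
    (hMA : ∀ i, IsAdjointTriple (conj i) (sdiv i) (nwar i))
    (R : A → B → P) (σ : A → B → ι) :
    ∀ (g : B → L2) (f : A → L1),
      f ≤ upOp R sdiv σ g ↔ g ≤ downOp R nwar σ f :=
  concept_forming_galois_connection_general conj sdiv nwar hMA R σ
end
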